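/- Good starting vertices exist: for any induced subgraph (S,T) of a bipartite graph with d(S,T) \geq 2\theta, there exists a subset S_\theta \subseteq S such that e(S_\theta, T) \geq e(S,T)/2, and for each v \in S_\theta there is a nonnegative unit vector \psi supported on S \cup T satisfying \psi A \geq \theta \psi (entrywise) and \psi(v) \geq 1/\sqrt{2|S|}. -/

import Mathlib

/-!
Suppose the good vertices carry less than half of `e(S,T)`. Then the remaining vertices `S'`
carry more than half, so `d(S',T) ≥ θ`. Let `B` be `A` restricted to `S' ∪ T`. By compactness
the Rayleigh quotient of `B` attains its maximum `λ` on the unit sphere, and since `B ≥ 0`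
it does so at a nonnegative vector `φ`, which is then an eigenvector: `Bφ = λφ`. Testing the
Rayleigh quotient on `1_{S'}/√(2|S'|) + 1_T/√(2|T|)` gives `λ ≥ d(S',T) ≥ θ`, so
`φA ≥ φB = λφ ≥ θφ`. As `B` is bipartite and `λ ≠ 0`, `φ` puts mass `1/2` on each side; some
`v ∈ S'` therefore has `φ(v)² ≥ 1/(2|S'|) ≥ 1/(2|S|)`, i.e. `v` is good, a contradiction.
-/

open Finset Matrix

section

variable {V : Type*}

def Matrix.IsBipartite {α : Type*} [Zero α] (M : Matrix V V α) (L R : Finset V) : Prop :=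
  ∀ u v, M u v ≠ 0 → (u ∈ L ∧ v ∈ R) ∨ (u ∈ R ∧ v ∈ L)

def Matrix.induce {α : Type*} [Zero α] [DecidableEq V] (M : Matrix V V α) (W : Finset V) :
    Matrix V V α :=
  of fun u w ↦ if u ∈ W ∧ w ∈ W then M u w else 0

namespace Matrix

section induce

variable {α : Type*} [Zero α] [DecidableEq V] {M : Matrix V V α} {W : Finset V}

lemma induce_apply (u w : V) : M.induce W u w = if u ∈ W ∧ w ∈ W then M u w else 0 := rfl

lemma IsSymm.induce (hM : M.IsSymm) : (M.induce W).IsSymm :=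
  IsSymm.ext fun u w ↦ by simp only [induce_apply, and_comm, hM.apply u w]

lemma IsBipartite.induce {L R S T : Finset V} (hM : M.IsBipartite L R) (hLR : Disjoint L R)
    (hS : S ⊆ L) (hT : T ⊆ R) : (M.induce (S ∪ T)).IsBipartite S T := by
  intro u w huw
  simp only [induce_apply, ne_eq, ite_eq_right_iff, not_forall, mem_union] at huw
  obtain ⟨⟨hu, hw⟩, huw⟩ := huw
  have hTL : ∀ x ∈ T, x ∉ L := fun x hx ↦ disjoint_right.1 hLR (hT hx)
  have hSR : ∀ x ∈ S, x ∉ R := fun x hx ↦ disjoint_left.1 hLR (hS hx)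
  rcases hM u w huw with ⟨huL, hwR⟩ | ⟨huR, hwL⟩
  · exact .inl ⟨hu.resolve_right fun h ↦ hTL u h huL, hw.resolve_left fun h ↦ hSR w h hwR⟩
  · exact .inr ⟨hu.resolve_left fun h ↦ hSR u h huR, hw.resolve_right fun h ↦ hTL w h hwL⟩

end induce

section induceReal

variable [DecidableEq V] {M : Matrix V V ℝ}

lemma induce_nonneg (hM : ∀ u w, 0 ≤ M u w) (W : Finset V) (u w : V) : 0 ≤ M.induce W u w := by
  rw [induce_apply]; split_ifs <;> simp [hM u w]

lemma induce_le (hM : ∀ u w, 0 ≤ M u w) (W : Finset V) (u w : V) : M.induce W u w ≤ M u w := by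
  rw [induce_apply]; split_ifs <;> simp [hM u w]

lemma vecMul_induce_le [Fintype V] (hM : ∀ u w, 0 ≤ M u w) (W : Finset V) {x : V → ℝ}
    (hx : ∀ u, 0 ≤ x u) (u : V) : (x ᵥ* M.induce W) u ≤ (x ᵥ* M) u :=
  sum_le_sum fun w _ ↦ mul_le_mul_of_nonneg_left (induce_le hM W w u) (hx w)

end induceReal

lemma IsBipartite.apply_eq_zero_of_notMem {α : Type*} [Zero α] {M : Matrix V V α}
    {L R : Finset V} (hM : M.IsBipartite L R) {u : V} (hL : u ∉ L) (hR : u ∉ R) (w : V) :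
    M u w = 0 := by
  by_contra h
  rcases hM u w h with h' | h' <;> tauto

section spectral

variable [Fintype V] {M : Matrix V V ℝ}

lemma dotProduct_mulVec_le_abs (hM : ∀ u w, 0 ≤ M u w) (x : V → ℝ) :
    x ⬝ᵥ M *ᵥ x ≤ (fun u ↦ |x u|) ⬝ᵥ M *ᵥ fun u ↦ |x u| := by
  simp only [dotProduct, mulVec, Finset.mul_sum]
  refine sum_le_sum fun u _ ↦ sum_le_sum fun w _ ↦ ?_
  calc x u * (M u w * x w) ≤ |x u * (M u w * x w)| := le_abs_self _
    _ = |x u| * (M u w * |x w|) := by rw [abs_mul, abs_mul, abs_of_nonneg (hM u w)]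

theorem IsSymm.exists_nonneg_eigenvector_isMaxOn [DecidableEq V] [Nonempty V]
    (hsym : M.IsSymm) (hM : ∀ u w, 0 ≤ M u w) :
    ∃ φ : V → ℝ, (∀ u, 0 ≤ φ u) ∧ ∑ u, φ u ^ 2 = 1 ∧
      (∀ x : V → ℝ, ∑ u, x u ^ 2 = 1 → x ⬝ᵥ M *ᵥ x ≤ φ ⬝ᵥ M *ᵥ φ) ∧
      M *ᵥ φ = (φ ⬝ᵥ M *ᵥ φ) • φ := by
  set T := toEuclideanCLM (n := V) (𝕜 := ℝ) M
  have hT : IsSelfAdjoint T := IsSelfAdjoint.map (by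
    rw [IsSelfAdjoint, star_eq_conjTranspose, conjTranspose_eq_transpose_of_trivial]
    exact hsym) _
  have hq (x : EuclideanSpace ℝ V) : T.reApplyInnerSelf x = x.ofLp ⬝ᵥ M *ᵥ x.ofLp := by
    rw [ContinuousLinearMap.reApplyInnerSelf_apply, real_inner_comm, inner_toEuclideanCLM]
    rfl
  have hsphere (x : EuclideanSpace ℝ V) : x ∈ Metric.sphere 0 1 ↔ ∑ u, x u ^ 2 = 1 := by
    rw [mem_sphere_zero_iff_norm, ← pow_left_inj₀ (norm_nonneg x) zero_le_one two_ne_zero,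
      EuclideanSpace.norm_sq_eq]
    simp
  obtain ⟨x, hx, hmax⟩ := (isCompact_sphere (0 : EuclideanSpace ℝ V) 1).exists_isMaxOn
    (NormedSpace.sphere_nonempty.mpr zero_le_one) T.reApplyInnerSelf_continuous.continuousOn
  set φ : EuclideanSpace ℝ V := WithLp.toLp 2 fun u ↦ |x u|
  have hφ : φ ∈ Metric.sphere 0 1 := by
    rw [hsphere] at hx ⊢
    simpa [φ] using hx
  have hφmax : IsMaxOn T.reApplyInnerSelf (Metric.sphere 0 1) φ := fun y hy ↦
    show T.reApplyInnerSelf y ≤ _ from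
      (hmax hy).trans <| by rw [hq, hq]; exact dotProduct_mulVec_le_abs hM x
  have hφnorm : ‖φ‖ = 1 := by simpa using hφ
  have heig := hT.eq_smul_self_of_isLocalExtrOn_real (x₀ := φ)
    (by rw [hφnorm]; exact .inr hφmax.localize)
  refine ⟨φ, fun u ↦ abs_nonneg _, (hsphere φ).1 hφ, fun y hy ↦ ?_, ?_⟩
  · simpa [hq] using hφmax (a := WithLp.toLp 2 y) ((hsphere _).2 hy)
  · simpa [T, ContinuousLinearMap.rayleighQuotient, hφnorm, hq] using congrArg WithLp.ofLp heig

end spectral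

namespace IsBipartite

variable [Fintype V] {M : Matrix V V ℝ} {L R : Finset V}

lemma apply_eq_zero_of_mulVec_eq_smul (hM : M.IsBipartite L R) {φ : V → ℝ} {c : ℝ} (hc : c ≠ 0)
    (hφ : M *ᵥ φ = c • φ) {u : V} (hL : u ∉ L) (hR : u ∉ R) : φ u = 0 := by
  have h := congrFun hφ u
  simp only [mulVec, dotProduct, hM.apply_eq_zero_of_notMem hL hR, zero_mul, sum_const_zero,
    Pi.smul_apply, smul_eq_mul] at h
  exact (mul_eq_zero.1 h.symm).resolve_left hc

lemma sum_sq_left_eq_sum_sq_right (hM : M.IsBipartite L R) (hsym : M.IsSymm)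
    (hLR : Disjoint L R) {φ : V → ℝ} {c : ℝ} (hc : c ≠ 0) (hφ : M *ᵥ φ = c • φ) :
    ∑ u ∈ L, φ u ^ 2 = ∑ u ∈ R, φ u ^ 2 := by
  classical
  -- `σ = 1_L - 1_R` anticommutes with `M`, so `⟨σφ, Mφ⟩` equals its own negative.
  set σ : V → ℝ := fun u ↦ (if u ∈ L then 1 else 0) - if u ∈ R then 1 else 0
  have hanti (u w : V) : σ u * M u w = -(M u w * σ w) := by
    by_cases h : M u w = 0
    · simp [h]
    rcases hM u w h with ⟨hu, hw⟩ | ⟨hu, hw⟩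
    · simp [σ, hu, hw, disjoint_left.1 hLR hu, disjoint_right.1 hLR hw]
    · simp [σ, hu, hw, disjoint_right.1 hLR hu, disjoint_left.1 hLR hw]
  have hzero : (σ * φ) ⬝ᵥ M *ᵥ φ = 0 := by
    have hneg : (σ * φ) ⬝ᵥ M *ᵥ φ = -(φ ⬝ᵥ M *ᵥ (σ * φ)) := by
      simp only [dotProduct, mulVec, Pi.mul_apply, mul_sum, ← sum_neg_distrib]
      refine sum_congr rfl fun u _ ↦ sum_congr rfl fun w _ ↦ ?_
      linear_combination φ u * φ w * hanti u w
    have hswap : φ ⬝ᵥ M *ᵥ (σ * φ) = (σ * φ) ⬝ᵥ M *ᵥ φ := by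
      rw [dotProduct_mulVec, ← mulVec_transpose, hsym.eq, dotProduct_comm]
    linarith
  rw [hφ, dotProduct_smul, smul_eq_mul, mul_eq_zero, or_iff_right hc] at hzero
  simpa [σ, dotProduct, sub_mul, sum_sub_distrib, sq, mul_assoc, sub_eq_zero] using hzero

lemma sum_sq_left_eq_half (hM : M.IsBipartite L R) (hsym : M.IsSymm) (hLR : Disjoint L R)
    {φ : V → ℝ} {c : ℝ} (hc : c ≠ 0) (hφ : M *ᵥ φ = c • φ) (hnorm : ∑ u, φ u ^ 2 = 1) :
    ∑ u ∈ L, φ u ^ 2 = 1 / 2 := by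
  classical
  have hsupp : ∑ u ∈ L ∪ R, φ u ^ 2 = 1 := by
    rw [← hnorm]
    refine sum_subset (subset_univ _) fun u _ hu ↦ ?_
    rw [mem_union, not_or] at hu
    rw [hM.apply_eq_zero_of_mulVec_eq_smul hc hφ hu.1 hu.2, sq, zero_mul]
  rw [sum_union hLR, ← hM.sum_sq_left_eq_sum_sq_right hsym hLR hc hφ] at hsupp
  linarith

lemma dotProduct_mulVec_piecewise [DecidableEq V] (hM : M.IsBipartite L R) (hsym : M.IsSymm)
    (hLR : Disjoint L R) (a b : ℝ) :
    let x : V → ℝ := fun u ↦ if u ∈ L then a else if u ∈ R then b else 0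
    x ⬝ᵥ M *ᵥ x = 2 * a * b * ∑ u ∈ L, ∑ w ∈ R, M u w := by
  intro x
  have hterm (u w : V) : x u * (M u w * x w) =
      a * b * ((if u ∈ L then if w ∈ R then M u w else 0 else 0) +
        if w ∈ L then if u ∈ R then M w u else 0 else 0) := by
    by_cases h : M u w = 0
    · have h' : M w u = 0 := by rw [hsym.apply u w]; exact h
      simp [h, h']
    rcases hM u w h with ⟨hu, hw⟩ | ⟨hu, hw⟩
    · simp [x, hu, hw, disjoint_right.1 hLR hw]; ring
    · simp [x, hu, hw, disjoint_right.1 hLR hu, hsym.apply u w]; ring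
  calc x ⬝ᵥ M *ᵥ x = ∑ u, ∑ w, x u * (M u w * x w) := by simp only [dotProduct, mulVec, mul_sum]
    _ = a * b * ((∑ u ∈ L, ∑ w ∈ R, M u w) + ∑ w ∈ L, ∑ u ∈ R, M w u) := by
      simp only [hterm, ← mul_sum, sum_add_distrib, sum_ite_irrel, sum_const_zero, sum_ite_mem,
        univ_inter]
      rw [sum_comm (s := R)]
    _ = _ := by ring

lemma exists_unit_dotProduct_mulVec_eq [DecidableEq V] (hM : M.IsBipartite L R)
    (hsym : M.IsSymm) (hLR : Disjoint L R) (hL : L.Nonempty) (hR : R.Nonempty) :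
    ∃ x : V → ℝ, ∑ u, x u ^ 2 = 1 ∧
      x ⬝ᵥ M *ᵥ x = (∑ u ∈ L, ∑ w ∈ R, M u w) / (√(#L : ℝ) * √(#R : ℝ)) := by
  have hl : (0 : ℝ) < #L := by exact_mod_cast hL.card_pos
  have hr : (0 : ℝ) < #R := by exact_mod_cast hR.card_pos
  set a := (√(2 * #L : ℝ))⁻¹
  set b := (√(2 * #R : ℝ))⁻¹
  refine ⟨_, ?_, (hM.dotProduct_mulVec_piecewise hsym hLR a b).trans ?_⟩
  · have hsq (u : V) : (if u ∈ L then a else if u ∈ R then b else 0) ^ 2 =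
        (if u ∈ L then a ^ 2 else 0) + if u ∈ R then b ^ 2 else 0 := by
      by_cases hu : u ∈ L
      · simp [hu, disjoint_left.1 hLR hu]
      · by_cases hu' : u ∈ R <;> simp [hu, hu']
    simp only [hsq, sum_add_distrib, sum_ite_mem, univ_inter, sum_const, nsmul_eq_mul, a, b,
      inv_pow, Real.sq_sqrt (by positivity : (0 : ℝ) ≤ 2 * #L),
      Real.sq_sqrt (by positivity : (0 : ℝ) ≤ 2 * #R)]
    field_simp
    ring
  · simp only [a, b, Real.sqrt_mul zero_le_two]
    field_simp
    rw [Real.sq_sqrt zero_le_two]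

end IsBipartite

end Matrix

variable [Fintype V] [DecidableEq V]

def IsGoodStartingVertex (A : Matrix V V ℝ) (S T : Finset V) (θ : ℝ) (v : V) : Prop :=
  ∃ ψ : V → ℝ, (∀ u, 0 ≤ ψ u) ∧ Real.sqrt (∑ u, ψ u ^ 2) = 1 ∧ (∀ u, ψ u ≠ 0 → u ∈ S ∪ T) ∧
    (∀ u, θ * ψ u ≤ (ψ ᵥ* A) u) ∧ 1 / Real.sqrt (2 * #S) ≤ ψ v

lemma IsGoodStartingVertex.mono {A : Matrix V V ℝ} {S S' T : Finset V} {θ : ℝ} {v : V}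
    (hv : IsGoodStartingVertex A S' T θ v) (hS : S' ⊆ S) (hvS : v ∈ S') :
    IsGoodStartingVertex A S T θ v := by
  obtain ⟨ψ, hnn, hnorm, hsupp, heig, hψv⟩ := hv
  refine ⟨ψ, hnn, hnorm, fun u hu ↦ union_subset_union_left hS (hsupp u hu), heig, le_trans ?_ hψv⟩
  have hS' : (0 : ℝ) < #S' := by exact_mod_cast card_pos.2 ⟨v, hvS⟩
  gcongr

theorem exists_isGoodStartingVertex {A : Matrix V V ℝ} (hsym : A.IsSymm)
    (hnn : ∀ u w, 0 ≤ A u w) {L R : Finset V} (hbip : A.IsBipartite L R) (hLR : Disjoint L R)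
    {S T : Finset V} (hS : S ⊆ L) (hT : T ⊆ R) (hSne : S.Nonempty) (hTne : T.Nonempty)
    {θ : ℝ} (hθ : 0 < θ) (hdense : θ * (√(#S : ℝ) * √(#T : ℝ)) ≤ ∑ u ∈ S, ∑ w ∈ T, A u w) :
    ∃ v ∈ S, IsGoodStartingVertex A S T θ v := by
  set B := A.induce (S ∪ T)
  have hBsym : B.IsSymm := hsym.induce
  have hBbip : B.IsBipartite S T := hbip.induce hLR hS hT
  have hST : Disjoint S T := hLR.mono hS hT
  have : Nonempty V := ⟨hSne.choose⟩
  obtain ⟨φ, hφnn, hφnorm, hφmax, hφeig⟩ :=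
    hBsym.exists_nonneg_eigenvector_isMaxOn (induce_nonneg hnn _)
  set c := φ ⬝ᵥ B *ᵥ φ
  have hθc : θ ≤ c := by
    obtain ⟨x, hx, hxB⟩ := hBbip.exists_unit_dotProduct_mulVec_eq hBsym hST hSne hTne
    have heB : ∑ u ∈ S, ∑ w ∈ T, B u w = ∑ u ∈ S, ∑ w ∈ T, A u w :=
      sum_congr rfl fun u hu ↦ sum_congr rfl fun w hw ↦ by simp [B, induce_apply, hu, hw]
    calc θ ≤ (∑ u ∈ S, ∑ w ∈ T, A u w) / (√(#S : ℝ) * √(#T : ℝ)) :=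
          (le_div_iff₀ (by positivity)).2 hdense
      _ = x ⬝ᵥ B *ᵥ x := by rw [hxB, heB]
      _ ≤ c := hφmax x hx
  have hc : c ≠ 0 := (hθ.trans_le hθc).ne'
  have hmass := hBbip.sum_sq_left_eq_half hBsym hST hc hφeig hφnorm
  obtain ⟨v, hv, hφv⟩ : ∃ v ∈ S, 1 / (2 * #S : ℝ) ≤ φ v ^ 2 := by
    refine exists_le_of_sum_le hSne ?_
    have hS0 : (#S : ℝ) ≠ 0 := Nat.cast_ne_zero.2 hSne.card_pos.ne'
    rw [hmass, sum_const, nsmul_eq_mul, mul_one_div, div_mul_cancel_right₀ hS0, one_div]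
  refine ⟨v, hv, φ, hφnn, by rw [hφnorm, Real.sqrt_one], fun u hu ↦ ?_, fun u ↦ ?_, ?_⟩
  · by_contra h
    rw [mem_union, not_or] at h
    exact hu (hBbip.apply_eq_zero_of_mulVec_eq_smul hc hφeig h.1 h.2)
  · calc θ * φ u ≤ c * φ u := mul_le_mul_of_nonneg_right hθc (hφnn u)
      _ = (φ ᵥ* B) u := by rw [← mulVec_transpose, hBsym.eq, hφeig]; rfl
      _ ≤ (φ ᵥ* A) u := vecMul_induce_le hnn _ hφnn u
  · rw [← Real.sqrt_sq (hφnn v), one_div, ← Real.sqrt_inv, ← one_div]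
    exact Real.sqrt_le_sqrt hφv

end

theorem good_starting_vertices_general {V : Type*} [Fintype V] [DecidableEq V]
    (A : Matrix V V ℝ) (hsym : A.IsSymm) (hnn : ∀ u v, 0 ≤ A u v)
    (L R : Finset V) (hdisj : Disjoint L R)
    (hbip : ∀ u v, A u v ≠ 0 → (u ∈ L ∧ v ∈ R) ∨ (u ∈ R ∧ v ∈ L))
    (S T : Finset V) (hS : S ⊆ L) (hT : T ⊆ R)
    (θ : ℝ) (hθ : 0 < θ)
    (hdense : 2 * θ * (Real.sqrt S.card * Real.sqrt T.card) ≤ ∑ u ∈ S, ∑ v ∈ T, A u v) :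
    ∃ Sθ : Finset V, Sθ ⊆ S ∧
      (∑ u ∈ S, ∑ v ∈ T, A u v) / 2 ≤ ∑ u ∈ Sθ, ∑ v ∈ T, A u v ∧
      ∀ v ∈ Sθ, ∃ ψ : V → ℝ,
        (∀ u, 0 ≤ ψ u) ∧
        Real.sqrt (∑ u, ψ u ^ 2) = 1 ∧
        (∀ u, ψ u ≠ 0 → u ∈ S ∪ T) ∧
        (∀ u, θ * ψ u ≤ Matrix.vecMul ψ A u) ∧
        1 / Real.sqrt (2 * S.card) ≤ ψ v := by
  classical
  refine ⟨S.filter (IsGoodStartingVertex A S T θ), filter_subset _ _, ?_,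
    fun v hv ↦ (mem_filter.1 hv).2⟩
  by_contra! hlt
  set S' := S.filter fun v ↦ ¬IsGoodStartingVertex A S T θ v
  have hS'S : S' ⊆ S := filter_subset _ _
  have hsplit := sum_filter_add_sum_filter_not S (IsGoodStartingVertex A S T θ)
    fun u ↦ ∑ w ∈ T, A u w
  have hdense' : θ * (√(#S' : ℝ) * √(#T : ℝ)) < ∑ u ∈ S', ∑ w ∈ T, A u w :=
    calc θ * (√(#S' : ℝ) * √(#T : ℝ)) ≤ θ * (√(#S : ℝ) * √(#T : ℝ)) := by gcongr
      _ ≤ (∑ u ∈ S, ∑ w ∈ T, A u w) / 2 := by linarith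
      _ < ∑ u ∈ S', ∑ w ∈ T, A u w := by linarith
  obtain ⟨u, hu, hTsum⟩ := exists_ne_zero_of_sum_ne_zero
    ((by positivity : 0 ≤ θ * (√(#S' : ℝ) * √(#T : ℝ))).trans_lt hdense').ne'
  obtain ⟨v, hv, hgood⟩ := exists_isGoodStartingVertex hsym hnn hbip hdisj (hS'S.trans hS) hT
    ⟨u, hu⟩ (nonempty_of_sum_ne_zero hTsum) hθ hdense'.le
  exact (mem_filter.1 hv).2 (hgood.mono hS'S hv)

/-- Lemma 2 (good starting vertices): if `(S,T)` is an induced subgraph of a bipartite graph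
with `d(S,T) ≥ 2θ`, then there is `S_θ ⊆ S` with `e(S_θ,T) ≥ e(S,T)/2` such that every
`v ∈ S_θ` admits a nonnegative unit vector `ψ` supported on `S ∪ T` with `ψA ≥ θψ`
entrywise and `ψ v ≥ 1/√(2|S|)`. -/
theorem good_starting_vertices {V : Type*} [Fintype V] [DecidableEq V]
    (A : Matrix V V ℝ) (hsym : A.IsSymm) (hnn : ∀ u v, 0 ≤ A u v)
    (L R : Finset V) (hdisj : Disjoint L R) (hunion : L ∪ R = Finset.univ)
    (hbip : ∀ u v, A u v ≠ 0 → (u ∈ L ∧ v ∈ R) ∨ (u ∈ R ∧ v ∈ L))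
    (S T : Finset V) (hS : S ⊆ L) (hT : T ⊆ R) (hSne : S.Nonempty) (hTne : T.Nonempty)
    (θ : ℝ) (hθ : 0 < θ)
    (hdense : 2 * θ * (Real.sqrt S.card * Real.sqrt T.card) ≤ ∑ u ∈ S, ∑ v ∈ T, A u v) :
    ∃ Sθ : Finset V, Sθ ⊆ S ∧
      (∑ u ∈ S, ∑ v ∈ T, A u v) / 2 ≤ ∑ u ∈ Sθ, ∑ v ∈ T, A u v ∧
      ∀ v ∈ Sθ, ∃ ψ : V → ℝ,
        (∀ u, 0 ≤ ψ u) ∧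
        Real.sqrt (∑ u, ψ u ^ 2) = 1 ∧
        (∀ u, ψ u ≠ 0 → u ∈ S ∪ T) ∧
        (∀ u, θ * ψ u ≤ Matrix.vecMul ψ A u) ∧
        1 / Real.sqrt (2 * S.card) ≤ ψ v :=
  good_starting_vertices_general A hsym hnn L R hdisj hbip S T hS hT θ hθ hdense
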